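/- Let Q = [−3,3] × [−3,3] ⊆ ℝ², and let Q = B ∪ W be a partition of Q into two disjoint sets. Suppose there are no points X, Y, Z ∈ Q, all in B or all in W, with dist(X,Y) = dist(Y,Z) = dist(Z,X) = 1. Then for every ε > 0 there exist points X, Y, Z ∈ B whose three pairwise distances all lie in the interval [1−ε, 1+ε], and likewise there exist points X', Y', Z' ∈ W whose three pairwise distances all lie in [1−ε, 1+ε]. -/

import Mathlib

/-- The closed square `[-3,3] × [-3,3]` in the Euclidean plane. -/
def Square3 : Set (EuclideanSpace ℝ (Fin 2)) :=
  {p | p 0 ∈ Set.Icc (-3 : ℝ) 3 ∧ p 1 ∈ Set.Icc (-3 : ℝ) 3}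

/-!
Suppose `W` has no unit triangle and `B` has no `ε`-almost unit triangle, and let `R ∈ W`. Two
points on the unit circle around `R` at angle `π/3` form a unit triangle with `R`, so one of them
lies in `B`. If the circle had no two `B`-points at almost unit distance, then with `θ` also
`θ + t` would be a `B`-angle for `0 ≤ t ≤ ε` (else `θ + t + π/3` would be one), and creeping along,
so would `θ + π/3`, which is absurd. A point within `ε` of `R` would complete such a pair to an
almost unit triangle, so it lies in `W`. Creeping along segments, `W` then contains the closed unit
ball around `R`, hence a unit triangle.
-/

open Set Metric Real

local notation "ℝ²" => EuclideanSpace ℝ (Fin 2)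

section Triangles

variable {P : Type*} [PseudoMetricSpace P]

def HasUnitTriangle (S : Set P) : Prop :=
  ∃ X Y Z, X ∈ S ∧ Y ∈ S ∧ Z ∈ S ∧ dist X Y = 1 ∧ dist Y Z = 1 ∧ dist Z X = 1

def HasAlmostUnitTriangle (ε : ℝ) (S : Set P) : Prop :=
  ∃ X Y Z, X ∈ S ∧ Y ∈ S ∧ Z ∈ S ∧
    dist X Y ∈ Icc (1 - ε) (1 + ε) ∧ dist Y Z ∈ Icc (1 - ε) (1 + ε) ∧
    dist Z X ∈ Icc (1 - ε) (1 + ε)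

theorem HasUnitTriangle.mono {S T : Set P} (h : HasUnitTriangle S) (hST : S ⊆ T) :
    HasUnitTriangle T :=
  let ⟨X, Y, Z, hX, hY, hZ, hd⟩ := h
  ⟨X, Y, Z, hST hX, hST hY, hST hZ, hd⟩

theorem one_mem_Icc_one_sub_one_add {ε : ℝ} (hε : 0 ≤ ε) : (1 : ℝ) ∈ Icc (1 - ε) (1 + ε) :=
  ⟨by linarith, by linarith⟩

theorem HasUnitTriangle.hasAlmostUnitTriangle {S : Set P} {ε : ℝ} (h : HasUnitTriangle S)
    (hε : 0 ≤ ε) : HasAlmostUnitTriangle ε S :=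
  let ⟨X, Y, Z, hX, hY, hZ, hXY, hYZ, hZX⟩ := h
  have h1 := one_mem_Icc_one_sub_one_add hε
  ⟨X, Y, Z, hX, hY, hZ, hXY ▸ h1, hYZ ▸ h1, hZX ▸ h1⟩

theorem dist_mem_Icc_of_dist_eq_one {x y z : P} {ε : ℝ} (hxz : dist x z = 1)
    (hxy : dist x y ≤ ε) : dist y z ∈ Icc (1 - ε) (1 + ε) := by
  have := abs_le.1 ((abs_dist_sub_le y x z).trans_eq (dist_comm y x))
  constructor <;> linarith

end Triangles

theorem forall_ge_of_forall_add_mem_Icc {p : ℝ → Prop} {a δ : ℝ} (hδ : 0 < δ) (ha : p a)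
    (hstep : ∀ x, a ≤ x → p x → ∀ t ∈ Icc 0 δ, p (x + t)) {x : ℝ} (hx : a ≤ x) : p x := by
  suffices ∀ n : ℕ, ∀ x, a ≤ x → x ≤ a + n * δ → p x by
    obtain ⟨n, hn⟩ := exists_nat_ge ((x - a) / δ)
    exact this n x hx (by linarith [(div_le_iff₀ hδ).1 hn])
  intro n
  induction n with
  | zero => intro x hax hxa; simpa [le_antisymm (by simpa using hxa) hax] using ha
  | succ n ih =>
    intro x hax hxa
    have hy := ih (max a (x - δ)) (le_max_left _ _)
      (max_le (le_add_of_nonneg_right (by positivity)) (by push_cast at hxa; linarith))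
    simpa using hstep _ (le_max_left _ _) hy (x - max a (x - δ))
      ⟨sub_nonneg.2 (max_le hax (by linarith)), by linarith [le_max_right a (x - δ)]⟩

theorem closedBall_zero_three_subset_square3 : closedBall (0 : ℝ²) 3 ⊆ Square3 := by
  intro p hp
  have hcoord (i : Fin 2) : p i ∈ Icc (-3 : ℝ) 3 :=
    abs_le.1 ((PiLp.norm_apply_le p i).trans (mem_closedBall_zero_iff.1 hp))
  exact ⟨hcoord 0, hcoord 1⟩

noncomputable def unitVec (θ : ℝ) : ℝ² := !₂[cos θ, sin θ]

theorem norm_unitVec (θ : ℝ) : ‖unitVec θ‖ = 1 := by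
  simp [EuclideanSpace.norm_eq, unitVec, Fin.sum_univ_two]

theorem dist_unitVec (a b : ℝ) : dist (unitVec a) (unitVec b) = 2 * |sin ((a - b) / 2)| := by
  have hsq : (cos a - cos b) ^ 2 + (sin a - sin b) ^ 2 = 2 ^ 2 * ((1 - cos (a - b)) / 2) := by
    rw [cos_sub]; nlinarith [sin_sq_add_cos_sq a, sin_sq_add_cos_sq b]
  simp only [EuclideanSpace.dist_eq, unitVec, Fin.sum_univ_two, Real.dist_eq, sq_abs]
  simp [hsq, abs_sin_half]

theorem dist_unitVec_le (a b : ℝ) : dist (unitVec a) (unitVec b) ≤ |a - b| := by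
  rw [dist_unitVec]
  have := abs_sin_le_abs (x := (a - b) / 2)
  rw [abs_div, abs_two] at this
  linarith

theorem dist_unitVec_add_pi_div_three (θ : ℝ) : dist (unitVec θ) (unitVec (θ + π / 3)) = 1 := by
  rw [dist_unitVec, show (θ - (θ + π / 3)) / 2 = -(π / 6) by ring, sin_neg, abs_neg,
    sin_pi_div_six]
  norm_num

theorem hasUnitTriangle_closedBall (R : ℝ²) : HasUnitTriangle (closedBall R 1) := by
  have hR (θ : ℝ) : dist (R + unitVec θ) R = 1 := by simp [norm_unitVec]
  refine ⟨R, R + unitVec 0, R + unitVec (π / 3), mem_closedBall_self zero_le_one,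
    (hR 0).le, (hR _).le, by rw [dist_comm, hR], ?_, hR _⟩
  simpa using dist_unitVec_add_pi_div_three 0

section Coloring

variable {B W : Set ℝ²} {ε : ℝ}

theorem exists_mem_sphere_dist_mem_Icc (hε : 0 < ε) (hW : ¬HasUnitTriangle W) {R : ℝ²}
    (hR : R ∈ W) (hsphere : sphere R 1 ⊆ B ∪ W) :
    ∃ Y ∈ B ∩ sphere R 1, ∃ Y' ∈ B ∩ sphere R 1, dist Y Y' ∈ Icc (1 - ε) (1 + ε) := by
  set A : ℝ → ℝ² := fun θ ↦ R + unitVec θ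
  have hA (θ : ℝ) : A θ ∈ sphere R 1 := by simp [A, norm_unitVec]
  have hAA (a b : ℝ) : dist (A a) (A b) = dist (unitVec a) (unitVec b) := dist_add_left _ _ _
  have hB (θ : ℝ) : A θ ∈ B ∨ A (θ + π / 3) ∈ B := by
    by_contra! h
    exact hW ⟨R, A θ, A (θ + π / 3), hR, (hsphere (hA θ)).resolve_left h.1,
      (hsphere (hA _)).resolve_left h.2, by rw [dist_comm]; exact hA θ,
      by rw [hAA, dist_unitVec_add_pi_div_three], hA _⟩
  by_contra! hfar
  obtain ⟨θ₀, hθ₀⟩ : ∃ θ, A θ ∈ B := (hB 0).elim (⟨_, ·⟩) (⟨_, ·⟩)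
  have hcreep (θ : ℝ) (hθ : θ₀ ≤ θ) : A θ ∈ B := by
    refine forall_ge_of_forall_add_mem_Icc (p := (A · ∈ B)) hε hθ₀ (fun θ _ hθB t ht ↦ ?_) hθ
    refine (hB (θ + t)).resolve_right fun hB' ↦ hfar _ ⟨hθB, hA θ⟩ _ ⟨hB', hA _⟩ ?_
    -- the chord of the arc `π/3 + t` differs from the chord of the arc `π/3` by at most `t`
    rw [hAA, dist_comm, show θ + t + π / 3 = θ + π / 3 + t by ring]
    refine dist_mem_Icc_of_dist_eq_one (by rw [dist_comm, dist_unitVec_add_pi_div_three]) ?_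
    exact (dist_unitVec_le _ _).trans (by simpa [abs_of_nonneg ht.1] using ht.2)
  refine hfar _ ⟨hθ₀, hA θ₀⟩ _ ⟨hcreep (θ₀ + π / 3) (by linarith [pi_pos]), hA _⟩ ?_
  rw [hAA, dist_unitVec_add_pi_div_three]
  exact one_mem_Icc_one_sub_one_add hε.le

theorem mem_of_dist_le (hε : 0 < ε) (hB : ¬HasAlmostUnitTriangle ε B) (hW : ¬HasUnitTriangle W)
    {R X : ℝ²} (hR : R ∈ W) (hsphere : sphere R 1 ⊆ B ∪ W) (hX : X ∈ B ∪ W)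
    (hXR : dist X R ≤ ε) : X ∈ W := by
  obtain ⟨Y, ⟨hY, hYR⟩, Y', ⟨hY', hY'R⟩, hYY'⟩ := exists_mem_sphere_dist_mem_Icc hε hW hR hsphere
  rw [mem_sphere, dist_comm] at hYR hY'R
  rw [dist_comm] at hXR
  refine hX.resolve_left fun hXB ↦ hB ⟨X, Y, Y', hXB, hY, hY',
    dist_mem_Icc_of_dist_eq_one hYR hXR, hYY', ?_⟩
  rw [dist_comm]
  exact dist_mem_Icc_of_dist_eq_one hY'R hXR

theorem closedBall_one_subset_of_mem (hε : 0 < ε) (hB : ¬HasAlmostUnitTriangle ε B)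
    (hW : ¬HasUnitTriangle W) {R : ℝ²} (hR : R ∈ W) (hcover : closedBall R 2 ⊆ B ∪ W) :
    closedBall R 1 ⊆ W := by
  intro X hX
  have hXR : dist R X ≤ 1 := by rw [dist_comm]; exact hX
  set S : ℝ → ℝ² := fun s ↦ AffineMap.lineMap R X s
  have hSR {s : ℝ} (hs : s ∈ Icc 0 1) : dist (S s) R ≤ 1 := by
    rw [dist_lineMap_left, Real.norm_eq_abs, abs_of_nonneg hs.1]
    nlinarith [hs.2, hXR, dist_nonneg (x := R) (y := X)]
  suffices ∀ s, 0 ≤ s → s ≤ 1 → S s ∈ W by simpa [S] using this 1 zero_le_one le_rfl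
  refine fun s hs ↦ forall_ge_of_forall_add_mem_Icc (p := fun s ↦ s ≤ 1 → S s ∈ W) hε
    (fun _ ↦ by simpa [S] using hR) ?_ hs
  intro s hs hSs t ht hst
  have hs1 : s ≤ 1 := by linarith [ht.1]
  refine mem_of_dist_le hε hB hW (hSs hs1) (fun y hy ↦ hcover ?_)
    (hcover (mem_closedBall.2 ((hSR ⟨by linarith [ht.1], hst⟩).trans one_le_two))) ?_
  · rw [mem_sphere] at hy
    calc dist y R ≤ dist y (S s) + dist (S s) R := dist_triangle _ _ _
      _ ≤ 2 := by linarith [hSR ⟨hs, hs1⟩]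
  · rw [dist_lineMap_lineMap, Real.dist_eq, add_sub_cancel_left, abs_of_nonneg ht.1]
    nlinarith [ht.1, ht.2, hXR, dist_nonneg (x := R) (y := X)]

theorem hasAlmostUnitTriangle_of_closedBall_subset (hε : 0 < ε)
    (hcover : closedBall (0 : ℝ²) 3 ⊆ B ∪ W) (hW : ¬HasUnitTriangle W) :
    HasAlmostUnitTriangle ε B := by
  by_contra hB
  obtain ⟨R, hR, hRB⟩ : ∃ R ∈ closedBall (0 : ℝ²) 1, R ∉ B := not_subset.1 fun h ↦
    hB (((hasUnitTriangle_closedBall 0).mono h).hasAlmostUnitTriangle hε.le)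
  have hRW : R ∈ W := (hcover (closedBall_subset_closedBall (by norm_num) hR)).resolve_left hRB
  have hball : closedBall R 2 ⊆ closedBall 0 3 :=
    closedBall_subset_closedBall' (by linarith [mem_closedBall.1 hR])
  exact hW ((hasUnitTriangle_closedBall R).mono
    (closedBall_one_subset_of_mem hε hB hW hRW (hball.trans hcover)))

end Coloring

theorem stmt6 (B W : Set (EuclideanSpace ℝ (Fin 2)))
    (hunion : B ∪ W = Square3)
    (hno : ¬∃ X Y Z : EuclideanSpace ℝ (Fin 2),
      ((X ∈ B ∧ Y ∈ B ∧ Z ∈ B) ∨ (X ∈ W ∧ Y ∈ W ∧ Z ∈ W)) ∧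
      dist X Y = 1 ∧ dist Y Z = 1 ∧ dist Z X = 1) :
    ∀ ε : ℝ, 0 < ε →
      (∃ X Y Z : EuclideanSpace ℝ (Fin 2), X ∈ B ∧ Y ∈ B ∧ Z ∈ B ∧
        dist X Y ∈ Set.Icc (1 - ε) (1 + ε) ∧ dist Y Z ∈ Set.Icc (1 - ε) (1 + ε) ∧
        dist Z X ∈ Set.Icc (1 - ε) (1 + ε)) ∧
      (∃ X Y Z : EuclideanSpace ℝ (Fin 2), X ∈ W ∧ Y ∈ W ∧ Z ∈ W ∧
        dist X Y ∈ Set.Icc (1 - ε) (1 + ε) ∧ dist Y Z ∈ Set.Icc (1 - ε) (1 + ε) ∧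
        dist Z X ∈ Set.Icc (1 - ε) (1 + ε)) := by
  intro ε hε
  have hcover : closedBall 0 3 ⊆ B ∪ W := hunion ▸ closedBall_zero_three_subset_square3
  have hB : ¬HasUnitTriangle B := fun ⟨X, Y, Z, hX, hY, hZ, hd⟩ ↦
    hno ⟨X, Y, Z, .inl ⟨hX, hY, hZ⟩, hd⟩
  have hW : ¬HasUnitTriangle W := fun ⟨X, Y, Z, hX, hY, hZ, hd⟩ ↦
    hno ⟨X, Y, Z, .inr ⟨hX, hY, hZ⟩, hd⟩
  exact ⟨hasAlmostUnitTriangle_of_closedBall_subset hε hcover hW,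
    hasAlmostUnitTriangle_of_closedBall_subset hε (union_comm B W ▸ hcover) hB⟩
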